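/- arXiv:1709.02625 — 2 statements merged into one kernel-verified Lean document; each statement's English description precedes it below -/
import Mathlib

section
/- Let W and B be N×N Hermitian positive semidefinite complex matrices, ĥ ∈ ℂᴺ, and t̄ ∈ ℝ. Then (ĥ+e)ᴴ W (ĥ+e) ≤ t̄ for every e ∈ ℂᴺ with eᴴ B e ≤ 1, if and only if there exists λ ≥ 0 such that the (N+1)×(N+1) Hermitian block matrix [[−W + λB, −Wĥ], [−ĥᴴW, t̄ − ĥᴴWĥ − λ]] is positive semidefinite. -/
/-!
Homogenize: with `x = (e, τ)`, the affine constraint and objective become the Hermitian forms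
`eᴴBe - |τ|²` and `(e + τ ĥ)ᴴW(e + τ ĥ) - t̄ |τ|²`, and the worst-case bound says that the
second is nonpositive wherever the first is (the case `τ = 0` is the recession direction, where
boundedness of the objective along a line forces `eᴴWe ≤ 0`). The S-lemma for two Hermitian forms
`f, g` with `g(x₀) < 0` then gives `λ ≥ 0` with `f ≤ λ g`, i.e. the LMI. Over `ℂ` the S-lemma is
elementary: if `g x + g y = 0`, a unimodular `v` can be chosen so that `z = x + v y` has
`g z = 0` and `f z ≥ f x + f y`; hence `f x / g x ≤ f y / g y` whenever `g x > 0 > g y`, and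
`λ = inf {f y / g y | g y < 0}` works.
-/

open Matrix ComplexOrder

lemma Complex.exists_normSq_eq_one_re_mul_eq_zero_re_mul_nonneg (a c : ℂ) :
    ∃ v : ℂ, normSq v = 1 ∧ (v * c).re = 0 ∧ 0 ≤ (v * a).re := by
  set v₀ := I * exp (↑(-arg c) * I) -- so that `v₀ * c = I * ‖c‖`
  have hv₀ : normSq v₀ = 1 := by simp [v₀, normSq_eq_norm_sq, norm_exp]
  have hv₀c : (v₀ * c).re = 0 := by
    conv_lhs => rw [← norm_mul_exp_arg_mul_I c]
    rw [show v₀ * (‖c‖ * exp (arg c * I)) = I * ‖c‖ * (exp (↑(-arg c) * I) * exp (arg c * I)) by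
      ring, ← exp_add]
    simp
  by_cases ha : 0 ≤ (v₀ * a).re
  · exact ⟨v₀, hv₀, hv₀c, ha⟩
  · exact ⟨-v₀, by rwa [normSq_neg], by simp [hv₀c], by simp only [neg_mul, neg_re]; linarith⟩

lemma nonpos_of_forall_mul_self_mul_le {a b : ℝ} (h : ∀ s : ℝ, s * s * a ≤ b) : a ≤ 0 := by
  by_contra! ha
  have := h √((|b| + 1) / a)
  rw [Real.mul_self_sqrt (by positivity), div_mul_cancel₀ _ ha.ne'] at this
  linarith [le_abs_self b]

namespace Matrix

variable {n : Type*} [Fintype n]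

def quadForm (A : Matrix n n ℂ) (x : n → ℂ) : ℝ := (star x ⬝ᵥ A *ᵥ x).re

lemma quadForm_smul (A : Matrix n n ℂ) (c : ℂ) (x : n → ℂ) :
    A.quadForm (c • x) = Complex.normSq c * A.quadForm x := by
  simp only [quadForm, mulVec_smul, star_smul, smul_dotProduct, dotProduct_smul, smul_eq_mul,
    ← mul_assoc]
  rw [Complex.star_def, Complex.mul_conj, Complex.re_ofReal_mul]

lemma quadForm_add_add_quadForm_sub (A : Matrix n n ℂ) (x y : n → ℂ) :
    A.quadForm (x + y) + A.quadForm (x - y) = 2 * A.quadForm x + 2 * A.quadForm y := by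
  simp only [quadForm, mulVec_add, mulVec_sub, star_add, star_sub, add_dotProduct, sub_dotProduct,
    dotProduct_add, dotProduct_sub, Complex.add_re, Complex.sub_re]
  ring

lemma IsHermitian.quadForm_add {A : Matrix n n ℂ} (hA : A.IsHermitian) (x y : n → ℂ) :
    A.quadForm (x + y) = A.quadForm x + A.quadForm y + 2 * (star x ⬝ᵥ A *ᵥ y).re := by
  have hyx : star y ⬝ᵥ A *ᵥ x = star (star x ⬝ᵥ A *ᵥ y) := by
    rw [← star_dotProduct_star, star_star, star_mulVec, hA.eq, dotProduct_mulVec]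
  simp only [quadForm, mulVec_add, star_add, add_dotProduct, dotProduct_add, Complex.add_re, hyx,
    Complex.star_def, Complex.conj_re]
  ring

lemma quadForm_sub (A B : Matrix n n ℂ) (x : n → ℂ) :
    (A - B).quadForm x = A.quadForm x - B.quadForm x := by
  simp [quadForm, sub_mulVec, dotProduct_sub]

lemma quadForm_real_smul (r : ℝ) (A : Matrix n n ℂ) (x : n → ℂ) :
    ((r : ℂ) • A).quadForm x = r * A.quadForm x := by
  simp [quadForm, smul_mulVec, dotProduct_smul]

lemma quadForm_conjTranspose_mul_mul {m : Type*} [Fintype m] (A : Matrix n n ℂ)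
    (K : Matrix n m ℂ) (x : m → ℂ) : (Kᴴ * A * K).quadForm x = A.quadForm (K *ᵥ x) := by
  rw [quadForm, quadForm, ← mulVec_mulVec, ← mulVec_mulVec, dotProduct_mulVec, ← star_mulVec]

lemma IsHermitian.posSemidef_iff_quadForm_nonneg {A : Matrix n n ℂ} (hA : A.IsHermitian) :
    A.PosSemidef ↔ ∀ x, 0 ≤ A.quadForm x := by
  simp only [posSemidef_iff_dotProduct_mulVec, hA, true_and, Complex.nonneg_iff, quadForm]
  exact forall_congr' fun x => and_iff_left (hA.im_star_dotProduct_mulVec_self x).symm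

lemma exists_quadForm_eq_zero_and_add_le {A B : Matrix n n ℂ} (hA : A.IsHermitian)
    (hB : B.IsHermitian) {x y : n → ℂ} (hxy : B.quadForm x + B.quadForm y = 0) :
    ∃ z, B.quadForm z = 0 ∧ A.quadForm x + A.quadForm y ≤ A.quadForm z := by
  obtain ⟨v, hv, hvB, hvA⟩ := Complex.exists_normSq_eq_one_re_mul_eq_zero_re_mul_nonneg
    (star x ⬝ᵥ A *ᵥ y) (star x ⬝ᵥ B *ᵥ y)
  refine ⟨x + v • y, ?_, ?_⟩
  · rw [hB.quadForm_add, quadForm_smul, hv, mulVec_smul, dotProduct_smul, smul_eq_mul, hvB]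
    linarith
  · rw [hA.quadForm_add, quadForm_smul, hv, mulVec_smul, dotProduct_smul, smul_eq_mul]
    linarith

lemma mul_quadForm_le_mul_quadForm {A B : Matrix n n ℂ} (hA : A.IsHermitian)
    (hB : B.IsHermitian) (H : ∀ z, B.quadForm z = 0 → A.quadForm z ≤ 0) {x y : n → ℂ}
    (hx : 0 ≤ B.quadForm x) (hy : B.quadForm y ≤ 0) :
    B.quadForm x * A.quadForm y ≤ B.quadForm y * A.quadForm x := by
  have hscale (s : ℝ) (C : Matrix n n ℂ) (w : n → ℂ) (hs : 0 ≤ s) :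
      C.quadForm ((√s : ℂ) • w) = s * C.quadForm w := by
    rw [quadForm_smul, Complex.normSq_ofReal, Real.mul_self_sqrt hs]
  obtain ⟨z, hz, hle⟩ := exists_quadForm_eq_zero_and_add_le hA hB
    (x := (√(-B.quadForm y) : ℂ) • x) (y := (√(B.quadForm x) : ℂ) • y)
    (by rw [hscale _ _ _ (by linarith), hscale _ _ _ hx]; ring)
  rw [hscale _ _ _ (by linarith), hscale _ _ _ hx] at hle
  linarith [H z hz]

theorem exists_nonneg_quadForm_le_mul {A B : Matrix n n ℂ} (hA : A.IsHermitian)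
    (hB : B.IsHermitian) {x₀ : n → ℂ} (hx₀ : B.quadForm x₀ < 0)
    (H : ∀ x, B.quadForm x ≤ 0 → A.quadForm x ≤ 0) :
    ∃ lam : ℝ, 0 ≤ lam ∧ ∀ x, A.quadForm x ≤ lam * B.quadForm x := by
  set T := (fun y => A.quadForm y / B.quadForm y) '' {y | B.quadForm y < 0}
  have hT : T.Nonempty := ⟨_, x₀, hx₀, rfl⟩
  have hT0 : ∀ t ∈ T, 0 ≤ t := by
    rintro _ ⟨y, hy, rfl⟩
    exact div_nonneg_of_nonpos (H y hy.le) hy.le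
  refine ⟨sInf T, le_csInf hT hT0, fun x => ?_⟩
  rcases lt_trichotomy (B.quadForm x) 0 with hx | hx | hx
  · exact (le_div_iff_of_neg hx).mp (csInf_le ⟨0, hT0⟩ ⟨x, hx, rfl⟩)
  · rw [hx, mul_zero]
    exact H x hx.le
  · refine (div_le_iff₀ hx).mp (le_csInf hT ?_)
    rintro _ ⟨y, hy, rfl⟩
    have := mul_quadForm_le_mul_quadForm hA hB (fun z hz => H z hz.le) hx.le hy.le
    rw [div_le_iff₀ hx, div_mul_eq_mul_div, le_div_iff_of_neg hy]
    linarith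

theorem sLemma_iff {A B : Matrix n n ℂ} (hA : A.IsHermitian) (hB : B.IsHermitian) {x₀ : n → ℂ}
    (hx₀ : B.quadForm x₀ < 0) :
    (∀ x, B.quadForm x ≤ 0 → A.quadForm x ≤ 0) ↔
      ∃ lam : ℝ, 0 ≤ lam ∧ ((lam : ℂ) • B - A).PosSemidef := by
  have hM (lam : ℝ) : ((lam : ℂ) • B - A).IsHermitian :=
    (hB.smul (Complex.conj_ofReal lam)).sub hA
  simp_rw [(hM _).posSemidef_iff_quadForm_nonneg, quadForm_sub, quadForm_real_smul, sub_nonneg]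
  refine ⟨exists_nonneg_quadForm_le_mul hA hB hx₀, ?_⟩
  rintro ⟨lam, hlam, h⟩ x hx
  exact (h x).trans (mul_nonpos_of_nonneg_of_nonpos hlam hx)

lemma quadForm_nonpos_of_forall_quadForm_le {A B : Matrix n n ℂ} {h e : n → ℂ} {t : ℝ}
    (H : ∀ e, B.quadForm e ≤ 1 → A.quadForm (h + e) ≤ t) (he : B.quadForm e ≤ 0) :
    A.quadForm e ≤ 0 := by
  have hline (c : ℂ) : A.quadForm (h + c • e) ≤ t :=
    H _ (by
      rw [quadForm_smul]
      exact (mul_nonpos_of_nonneg_of_nonpos (Complex.normSq_nonneg c) he).trans zero_le_one)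
  refine nonpos_of_forall_mul_self_mul_le (b := t - A.quadForm h) fun s => ?_
  have hpar := quadForm_add_add_quadForm_sub A h ((s : ℂ) • e)
  rw [quadForm_smul, Complex.normSq_ofReal, sub_eq_add_neg, ← neg_smul] at hpar
  linarith [hline s, hline (-s)]

variable [DecidableEq n]

def homogenization (A : Matrix n n ℂ) (h : n → ℂ) (t : ℝ) : Matrix (n ⊕ Unit) (n ⊕ Unit) ℂ :=
  (fromCols 1 (replicateCol Unit h))ᴴ * A * fromCols 1 (replicateCol Unit h) -
    fromBlocks 0 0 0 (of fun _ _ => (t : ℂ))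

lemma quadForm_homogenization (A : Matrix n n ℂ) (h : n → ℂ) (t : ℝ) (e : n → ℂ) (τ : ℂ) :
    (A.homogenization h t).quadForm (Sum.elim e fun _ => τ) =
      A.quadForm (e + τ • h) - t * Complex.normSq τ := by
  have hK : fromCols 1 (replicateCol Unit h) *ᵥ Sum.elim e (fun _ => τ) = e + τ • h := by
    rw [fromCols_mulVec_sumElim, one_mulVec]
    ext i
    simp [replicateCol, mulVec, dotProduct, mul_comm]
  have hD : (fromBlocks 0 0 0 (of fun _ _ => (t : ℂ))).quadForm (Sum.elim e fun _ : Unit => τ) =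
      t * Complex.normSq τ := by
    simp [quadForm, mulVec, dotProduct, Complex.normSq_apply]
    ring
  rw [homogenization, quadForm_sub, quadForm_conjTranspose_mul_mul, hK, hD]

lemma homogenization_eq_fromBlocks (A : Matrix n n ℂ) (h : n → ℂ) (t : ℝ) :
    A.homogenization h t = fromBlocks A (replicateCol Unit (A *ᵥ h))
      (replicateRow Unit (star h ᵥ* A)) (of fun _ _ => star h ⬝ᵥ A *ᵥ h - t) := by
  simp only [homogenization, conjTranspose_fromCols_eq_fromRows_conjTranspose, fromRows_mul]
  ext (i | i) (j | j) <;> simp [replicateCol_mulVec, dotProduct_mulVec] <;> rfl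

lemma IsHermitian.homogenization {A : Matrix n n ℂ} (hA : A.IsHermitian) (h : n → ℂ) (t : ℝ) :
    (A.homogenization h t).IsHermitian :=
  (isHermitian_conjTranspose_mul_mul _ hA).sub
    (isHermitian_fromBlocks_iff.mpr ⟨by simp, by simp, by simp, by ext; simp⟩)

theorem forall_quadForm_le_iff_homogenization (A B : Matrix n n ℂ) (h : n → ℂ) (t : ℝ) :
    (∀ e, B.quadForm e ≤ 1 → A.quadForm (h + e) ≤ t) ↔
      ∀ x, (B.homogenization 0 1).quadForm x ≤ 0 → (A.homogenization h t).quadForm x ≤ 0 := by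
  refine ⟨fun H x hx => ?_, fun H e he => ?_⟩
  · obtain ⟨e, τ, rfl⟩ : ∃ e τ, x = Sum.elim e fun _ => τ :=
      ⟨x ∘ Sum.inl, x (Sum.inr ()), by ext (i | i) <;> rfl⟩
    rw [quadForm_homogenization] at hx ⊢
    rcases eq_or_ne τ 0 with rfl | hτ
    · simp only [zero_smul, add_zero, map_zero, mul_zero, sub_zero] at hx ⊢
      exact quadForm_nonpos_of_forall_quadForm_le H hx
    · obtain ⟨e, rfl⟩ : ∃ e', e = τ • e' := ⟨τ⁻¹ • e, (smul_inv_smul₀ hτ e).symm⟩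
      have hτ2 := Complex.normSq_pos.mpr hτ
      rw [smul_zero, add_zero, quadForm_smul] at hx
      have he : B.quadForm e ≤ 1 := le_of_mul_le_mul_left (by linarith) hτ2
      have hbound := mul_le_mul_of_nonneg_left (H e he) hτ2.le
      rw [← smul_add, add_comm, quadForm_smul]
      linarith
  · have := H (Sum.elim e fun _ => 1) (by simp [quadForm_homogenization, he])
    simpa [quadForm_homogenization, add_comm] using this

lemma fromBlocks_eq_smul_homogenization_sub (A B : Matrix n n ℂ) (h : n → ℂ) (t lam : ℝ) :
    fromBlocks (-A + (lam : ℂ) • B) (of fun i _ => -((A *ᵥ h) i))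
        (of fun _ j => -((star h ᵥ* A) j)) (of fun _ _ => (t : ℂ) - star h ⬝ᵥ A *ᵥ h - lam) =
      (lam : ℂ) • B.homogenization 0 1 - A.homogenization h t := by
  rw [homogenization_eq_fromBlocks, homogenization_eq_fromBlocks]
  ext (i | i) (j | j) <;> simp <;> ring

end Matrix

/-- LMI reformulation, via the complex S-lemma, of a worst-case quadratic upper-bound
constraint over an ellipsoidal uncertainty set. -/
theorem worst_case_upper_bound_iff_LMI {N : ℕ}
    (W B : Matrix (Fin N) (Fin N) ℂ) (hW : W.PosSemidef) (hB : B.PosSemidef)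
    (hh : Fin N → ℂ) (tb : ℝ) :
    (∀ e : Fin N → ℂ, (star e ⬝ᵥ B *ᵥ e).re ≤ 1 →
        (star (hh + e) ⬝ᵥ W *ᵥ (hh + e)).re ≤ tb) ↔
      (∃ lam : ℝ, 0 ≤ lam ∧
        (Matrix.fromBlocks (-W + (lam : ℂ) • B)
            (Matrix.of fun i (_ : Unit) => -((W *ᵥ hh) i))
            (Matrix.of fun (_ : Unit) j => -((star hh ᵥ* W) j))
            (Matrix.of fun (_ : Unit) (_ : Unit) =>
              (tb : ℂ) - star hh ⬝ᵥ W *ᵥ hh - (lam : ℂ))).PosSemidef) := by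
  have hslater : (B.homogenization 0 1).quadForm (Sum.elim 0 fun _ => 1) < 0 := by
    rw [quadForm_homogenization]
    simp [quadForm]
  simp_rw [fromBlocks_eq_smul_homogenization_sub]
  exact (forall_quadForm_le_iff_homogenization W B hh tb).trans
    (sLemma_iff (hW.1.homogenization hh tb) (hB.1.homogenization 0 1) hslater)
end

section
/- Fix i and let ĥ_{i,j} ∈ ℂᴺ (j = 1,…,K), B_{i,j} be N×N Hermitian positive semidefinite matrices, W_1, …, W_K be N×N Hermitian positive semidefinite matrices, and let ζ ∈ (0,1], ρ ∈ [0,1], η > 0, σ² > 0. Then the worst-case energy-harvesting constraint 'ζ(1−ρ)(Σ_{j=1}^{K} (ĥ_{i,j}+e_{i,j})ᴴ W_j (ĥ_{i,j}+e_{i,j}) + σ²) ≥ η for all (e_{i,1},…,e_{i,K}) with e_{i,j}ᴴ B_{i,j} e_{i,j} ≤ 1 for every j' holds if and only if there exist μ_{i,j} ≥ 0 and t_{i,j} ≥ 0 (j = 1,…,K) such that: (a) the 2×2 real symmetric matrix [[ζ(1−ρ), √η], [√η, Σ_{j=1}^{K} t_{i,j} + σ²]] is positive semidefinite, and (b) for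 each j the (N+1)×(N+1) Hermitian block matrix [[W_j + μ_{i,j}B_{i,j}, W_jĥ_{i,j}], [ĥ_{i,j}ᴴW_j, ĥ_{i,j}ᴴW_jĥ_{i,j} − t_{i,j} − μ_{i,j}]] is positive semidefinite. -/
/-!
Because the uncertainty set is a product of ellipsoids, the worst case can be taken separately for
each user: the constraint says `η ≤ ζ (1 - ρ) (∑ j, t j + σ²)`, where `t j` is the infimum of
`(ĥⱼ + e)ᴴ Wⱼ (ĥⱼ + e)` over `eᴴ Bⱼ e ≤ 1`, and this is the 2 × 2 LMI.
For a single user, `t ≤ (ĥ + e)ᴴ W (ĥ + e)` on the ellipsoid is a convex problem with the Slater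
point `e = 0`, so Lagrange duality gives `μ ≥ 0` with
`t ≤ (ĥ + e)ᴴ W (ĥ + e) + μ (eᴴ B e - 1)` for all `e` (the S-lemma). Homogenizing `e ↦ (e, 1)`
turns this inequality into positive semidefiniteness of the `(N + 1) × (N + 1)` block matrix.
-/

open Matrix ComplexOrder Set

lemma nonpos_of_forall_add_mul_le {c k u : ℝ} (h : ∀ s : ℝ, 0 ≤ s → c + s * k ≤ u) :
    k ≤ 0 := by
  by_contra! hk
  have := h ((|u - c| + 1) / k) (by positivity)
  rw [div_mul_cancel₀ _ hk.ne'] at this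
  linarith [le_abs_self (u - c)]

/-- The normal `(α, β)` of a line separating the open quadrant `(-∞, 0) × (-∞, m)` from
`{(p, q) | ∃ x, g x ≤ p ∧ f x ≤ q}` gives the multiplier `α / β`; the Slater point `x₀` rules
out `β = 0`. -/
theorem ConvexOn.exists_lagrange_multiplier {E : Type*} [AddCommGroup E] [Module ℝ E]
    {f g : E → ℝ} (hf : ConvexOn ℝ univ f) (hg : ConvexOn ℝ univ g) {x₀ : E} (hx₀ : g x₀ < 0)
    {m : ℝ} (hm : ∀ x, g x ≤ 0 → m ≤ f x) :
    ∃ μ : ℝ, 0 ≤ μ ∧ ∀ x, m ≤ f x + μ * g x := by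
  set A : Set (ℝ × ℝ) := {p | ∃ x, g x ≤ p.1 ∧ f x ≤ p.2}
  have hA : Convex ℝ A := by
    rintro p ⟨x, hgx, hfx⟩ q ⟨y, hgy, hfy⟩ a b ha hb hab
    refine ⟨a • x + b • y, ?_, ?_⟩
    · calc g (a • x + b • y) ≤ a * g x + b * g y := hg.2 trivial trivial ha hb hab
        _ ≤ (a • p + b • q).1 := by simp only [Prod.fst_add, Prod.smul_fst, smul_eq_mul]; gcongr
    · calc f (a • x + b • y) ≤ a * f x + b * f y := hf.2 trivial trivial ha hb hab
        _ ≤ (a • p + b • q).2 := by simp only [Prod.snd_add, Prod.smul_snd, smul_eq_mul]; gcongr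
  have hdisj : Disjoint (Iio 0 ×ˢ Iio m) A := by
    rw [Set.disjoint_left]
    rintro p ⟨hp₁, hp₂⟩ ⟨x, hgx, hfx⟩
    exact (hm x (hgx.trans hp₁.le)).not_gt (hfx.trans_lt hp₂)
  obtain ⟨φ, u, hφO, hφA⟩ :=
    geometric_hahn_banach_open ((convex_Iio 0).prod (convex_Iio m))
      (isOpen_Iio.prod isOpen_Iio) hA hdisj
  set α := φ (1, 0)
  set β := φ (0, 1)
  have hφ : ∀ x y : ℝ, φ (x, y) = x * α + y * β := by
    intro x y
    have : ((x, y) : ℝ × ℝ) = x • ((1 : ℝ), (0 : ℝ)) + y • ((0 : ℝ), (1 : ℝ)) := by simp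
    rw [this, map_add, map_smul, map_smul, smul_eq_mul, smul_eq_mul]
  have hφ_closure : ∀ x ≤ 0, ∀ y ≤ m, x * α + y * β ≤ u := by
    intro x hx y hy
    have hsub : closure (Iio (0 : ℝ) ×ˢ Iio m) ⊆ {p | φ p ≤ u} :=
      closure_minimal (fun p hp => (hφO p hp).le) (isClosed_le φ.continuous continuous_const)
    rw [closure_prod_eq, closure_Iio, closure_Iio] at hsub
    rw [← hφ]
    exact hsub (show (x, y) ∈ Iic 0 ×ˢ Iic m from ⟨hx, hy⟩)
  have hα : 0 ≤ α := by
    refine neg_nonpos.1 (nonpos_of_forall_add_mul_le (c := m * β) (u := u) fun s hs => ?_)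
    linarith [hφ_closure (-s) (by linarith) m le_rfl]
  have hβ : 0 < β := by
    refine lt_of_le_of_ne
      (neg_nonpos.1 (nonpos_of_forall_add_mul_le (c := m * β) (u := u) fun s hs => ?_))
      fun hβ0 => ?_
    · linarith [hφ_closure 0 le_rfl (m - s) (by linarith)]
    · have h₁ := hφO (g x₀, m - 1) ⟨hx₀, by simp⟩
      have h₂ := hφA (g x₀, f x₀) ⟨x₀, le_rfl, le_rfl⟩
      rw [hφ, ← hβ0] at h₁ h₂
      linarith
  refine ⟨α / β, div_nonneg hα hβ.le, fun x => ?_⟩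
  have h₁ := hφ_closure 0 le_rfl m le_rfl
  have h₂ := hφA (g x, f x) ⟨x, le_rfl, le_rfl⟩
  rw [hφ] at h₂
  have hβμ : (f x + α / β * g x) * β = g x * α + f x * β := by field_simp; ring
  rw [← mul_le_mul_iff_left₀ hβ, hβμ]
  linarith

theorem le_sum_csInf_image_of_forall_le {ι : Type*} [Fintype ι] {X : ι → Type*}
    {f : ∀ j, X j → ℝ} {S : ∀ j, Set (X j)} (hS : ∀ j, (S j).Nonempty) {c : ℝ}
    (h : ∀ x : ∀ j, X j, (∀ j, x j ∈ S j) → c ≤ ∑ j, f j (x j)) :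
    c ≤ ∑ j, sInf (f j '' S j) := by
  by_contra! hlt
  set ε := (c - ∑ j, sInf (f j '' S j)) / (Fintype.card ι + 1)
  have hε : 0 < ε := div_pos (by linarith) (by positivity)
  have hx : ∀ j, ∃ x ∈ S j, f j x < sInf (f j '' S j) + ε := fun j => by
    obtain ⟨_, ⟨x, hx, rfl⟩, hlt⟩ :=
      exists_lt_of_csInf_lt ((hS j).image (f j)) (lt_add_of_pos_right _ hε)
    exact ⟨x, hx, hlt⟩
  choose x hxS hxf using hx
  have hsum : ∑ j, f j (x j) ≤ ∑ j, sInf (f j '' S j) + Fintype.card ι * ε :=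
    calc ∑ j, f j (x j) ≤ ∑ j, (sInf (f j '' S j) + ε) :=
          Finset.sum_le_sum fun j _ => (hxf j).le
      _ = _ := by rw [Finset.sum_add_distrib, Finset.sum_const, Finset.card_univ, nsmul_eq_mul]
  have hcε : (Fintype.card ι + 1) * ε = c - ∑ j, sInf (f j '' S j) :=
    mul_div_cancel₀ _ (by positivity)
  linarith [h x hxS]

lemma Matrix.posSemidef_fin_two_iff {a r d : ℝ} :
    (!![a, r; r, d] : Matrix (Fin 2) (Fin 2) ℝ).PosSemidef ↔
      0 ≤ a ∧ 0 ≤ d ∧ r ^ 2 ≤ a * d := by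
  refine ⟨fun hM => ⟨hM.diag_nonneg (i := 0), hM.diag_nonneg (i := 1),
    by simpa [det_fin_two_of, sq] using hM.det_nonneg⟩, fun ⟨ha, hd, hrd⟩ => ?_⟩
  refine .of_dotProduct_mulVec_nonneg ?_ fun x => ?_
  · ext i j
    fin_cases i <;> fin_cases j <;> simp
  · have hform : star x ⬝ᵥ !![a, r; r, d] *ᵥ x =
        a * x 0 ^ 2 + 2 * r * (x 0 * x 1) + d * x 1 ^ 2 := by
      simp only [dotProduct, Pi.star_apply, star_trivial, mulVec, of_apply, cons_val',
        cons_val_fin_one, Fin.sum_univ_two, cons_val_zero, cons_val_one]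
      ring
    rw [hform]
    rcases ha.eq_or_lt with rfl | ha
    · obtain rfl : r = 0 := by nlinarith
      simp only [zero_mul, mul_zero, zero_add]
      positivity
    · refine nonneg_of_mul_nonneg_right ?_ ha
      nlinarith [sq_nonneg (a * x 0 + r * x 1), mul_nonneg (sub_nonneg.2 hrd) (sq_nonneg (x 1))]

section QuadraticForm

variable {n : Type*} [Fintype n]

lemma star_smul_dotProduct_mulVec_smul (M : Matrix n n ℂ) (c : ℂ) (x : n → ℂ) :
    star (c • x) ⬝ᵥ M *ᵥ (c • x) = star c * c * (star x ⬝ᵥ M *ᵥ x) := by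
  rw [star_smul, mulVec_smul, dotProduct_smul, smul_dotProduct, smul_eq_mul, smul_eq_mul,
    mul_left_comm, mul_assoc]

theorem Matrix.PosSemidef.convexOn_re_dotProduct_mulVec {M : Matrix n n ℂ}
    (hM : M.PosSemidef) : ConvexOn ℝ univ fun x : n → ℂ => (star x ⬝ᵥ M *ᵥ x).re := by
  refine ⟨convex_univ, fun x _ y _ a b ha hb hab => ?_⟩
  have hexp : star (a • x + b • y) ⬝ᵥ M *ᵥ (a • x + b • y) =
      a * (star x ⬝ᵥ M *ᵥ x) + b * (star y ⬝ᵥ M *ᵥ y) -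
        (a * b : ℝ) * (star (x - y) ⬝ᵥ M *ᵥ (x - y)) := by
    simp only [star_add, star_sub, star_smul, star_trivial, mulVec_add, mulVec_sub, mulVec_smul,
      dotProduct_add, dotProduct_sub, add_dotProduct, sub_dotProduct, dotProduct_smul,
      smul_dotProduct, Complex.real_smul, Complex.ofReal_mul]
    rw [eq_sub_of_add_eq hab]
    push_cast
    ring
  have hxy := (Complex.nonneg_iff.1 (hM.dotProduct_mulVec_nonneg (x - y))).1
  dsimp only
  rw [hexp]
  simp only [Complex.sub_re, Complex.add_re, Complex.re_ofReal_mul, smul_eq_mul]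
  nlinarith [mul_nonneg (mul_nonneg ha hb) hxy]

lemma Matrix.IsHermitian.zero_le_dotProduct_mulVec_iff {M : Matrix n n ℂ} (hM : M.IsHermitian)
    (x : n → ℂ) : 0 ≤ star x ⬝ᵥ M *ᵥ x ↔ 0 ≤ (star x ⬝ᵥ M *ᵥ x).re := by
  rw [Complex.nonneg_iff, eq_comm]
  exact and_iff_left (hM.im_star_dotProduct_mulVec_self x)

lemma sumElim_one_dotProduct_fromBlocks_mulVec (A : Matrix n n ℂ) (b c : n → ℂ) (d : ℂ)
    (e : n → ℂ) :
    star (Sum.elim e 1) ⬝ᵥ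
        fromBlocks A (replicateCol Unit b) (replicateRow Unit c) (of fun _ _ => d) *ᵥ
          Sum.elim e 1 =
      star e ⬝ᵥ A *ᵥ e + star e ⬝ᵥ b + c ⬝ᵥ e + d := by
  have hb : replicateCol Unit b *ᵥ 1 = b := by ext; simp [mulVec]
  have hc : replicateRow Unit c *ᵥ e = fun _ => c ⬝ᵥ e := rfl
  have hd : (of fun _ _ => d : Matrix Unit Unit ℂ) *ᵥ 1 = fun _ => d := by ext; simp [mulVec]
  rw [Function.star_sumElim, fromBlocks_mulVec, sumElim_dotProduct_sumElim, Sum.elim_comp_inl,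
    Sum.elim_comp_inr, hb, hc, hd, dotProduct_add]
  simp only [dotProduct, Pi.star_apply, RCLike.star_def, Finset.univ_unique,
    PUnit.default_eq_unit, Pi.one_apply, star_one, Pi.add_apply, one_mul, Finset.sum_const,
    Finset.card_singleton, smul_add, one_smul]
  ring

theorem Matrix.posSemidef_fromBlocks_iff_of_posSemidef {A : Matrix n n ℂ}
    {B : Matrix n Unit ℂ} {C : Matrix Unit n ℂ} {D : Matrix Unit Unit ℂ} (hA : A.PosSemidef)
    (hM : (fromBlocks A B C D).IsHermitian) :
    (fromBlocks A B C D).PosSemidef ↔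
      ∀ e, 0 ≤ star (Sum.elim e 1) ⬝ᵥ fromBlocks A B C D *ᵥ Sum.elim e 1 := by
  refine ⟨fun hM' e => hM'.dotProduct_mulVec_nonneg _, fun h => ?_⟩
  refine .of_dotProduct_mulVec_nonneg hM fun x => ?_
  set z := x (Sum.inr ())
  set e := x ∘ Sum.inl
  by_cases hz : z = 0
  · have hx : x = Sum.elim e 0 := by
      funext i; rcases i with k | ⟨⟩ <;> simp [e, z, hz]
    simpa [hx, Function.star_sumElim, fromBlocks_mulVec, sumElim_dotProduct_sumElim] using
      hA.dotProduct_mulVec_nonneg e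
  · have hx : x = z • Sum.elim (z⁻¹ • e) 1 := by
      funext i; rcases i with k | ⟨⟩ <;> simp [e, z, hz]
    rw [hx, star_smul_dotProduct_mulVec_smul]
    exact mul_nonneg (star_mul_self_nonneg z) (h _)

end QuadraticForm

section SProcedure

variable {n : Type*} [Fintype n] {W B : Matrix n n ℂ} {v : n → ℂ} {t μ : ℝ}

variable (W B v t μ) in
def sProcedureMatrix : Matrix (n ⊕ Unit) (n ⊕ Unit) ℂ :=
  fromBlocks (W + (μ : ℂ) • B) (replicateCol Unit (W *ᵥ v)) (replicateRow Unit (star v ᵥ* W))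
    (of fun _ _ => star v ⬝ᵥ W *ᵥ v - t - μ)

lemma isHermitian_sProcedureMatrix (hW : W.IsHermitian) (hB : B.IsHermitian) :
    (sProcedureMatrix W B v t μ).IsHermitian := by
  have hcol : (replicateCol Unit (W *ᵥ v))ᴴ = replicateRow Unit (star v ᵥ* W) := by
    rw [conjTranspose_replicateCol, star_mulVec, hW.eq]
  refine isHermitian_fromBlocks_iff.2 ⟨hW.add (IsSelfAdjoint.smul (Complex.conj_ofReal μ) hB),
    hcol, by rw [← hcol, conjTranspose_conjTranspose], ?_⟩
  ext
  simp [Complex.conj_eq_iff_im.2 (hW.im_star_dotProduct_mulVec_self v)]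

theorem posSemidef_sProcedureMatrix_iff (hW : W.PosSemidef) (hB : B.PosSemidef) (hμ : 0 ≤ μ) :
    (sProcedureMatrix W B v t μ).PosSemidef ↔
      ∀ e, t ≤ (star (v + e) ⬝ᵥ W *ᵥ (v + e)).re + μ * ((star e ⬝ᵥ B *ᵥ e).re - 1) := by
  have hA : (W + (μ : ℂ) • B).PosSemidef := hW.add (hB.smul (by exact_mod_cast hμ))
  have hM := isHermitian_sProcedureMatrix (v := v) (t := t) (μ := μ) hW.1 hB.1
  rw [sProcedureMatrix] at hM ⊢
  rw [posSemidef_fromBlocks_iff_of_posSemidef hA hM]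
  refine forall_congr' fun e => ?_
  rw [hM.zero_le_dotProduct_mulVec_iff, sumElim_one_dotProduct_fromBlocks_mulVec]
  have hexp : star e ⬝ᵥ (W + (μ : ℂ) • B) *ᵥ e + star e ⬝ᵥ W *ᵥ v + (star v ᵥ* W) ⬝ᵥ e +
      (star v ⬝ᵥ W *ᵥ v - t - μ) =
      star (v + e) ⬝ᵥ W *ᵥ (v + e) + μ * (star e ⬝ᵥ B *ᵥ e - 1) - t := by
    simp only [star_add, add_mulVec, smul_mulVec, mulVec_add, dotProduct_add, add_dotProduct,
      dotProduct_smul, smul_eq_mul, ← dotProduct_mulVec]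
    ring
  rw [hexp]
  simp only [Complex.sub_re, Complex.add_re, Complex.re_ofReal_mul, Complex.one_re,
    Complex.ofReal_re, sub_nonneg]

theorem exists_posSemidef_sProcedureMatrix_iff (hW : W.PosSemidef) (hB : B.PosSemidef) :
    (∃ μ : ℝ, 0 ≤ μ ∧ (sProcedureMatrix W B v t μ).PosSemidef) ↔
      ∀ e, (star e ⬝ᵥ B *ᵥ e).re ≤ 1 → t ≤ (star (v + e) ⬝ᵥ W *ᵥ (v + e)).re := by
  constructor
  · rintro ⟨μ, hμ, hM⟩ e he
    have := (posSemidef_sProcedureMatrix_iff hW hB hμ).1 hM e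
    nlinarith [mul_nonneg hμ (sub_nonneg.2 he)]
  · intro h
    have hf := hW.convexOn_re_dotProduct_mulVec.translate_right v
    rw [preimage_univ] at hf
    obtain ⟨μ, hμ, hL⟩ := hf.exists_lagrange_multiplier
      (hB.convexOn_re_dotProduct_mulVec.add_const (-1)) (x₀ := 0) (by simp)
      fun e he => h e (by simpa [← sub_eq_add_neg] using he)
    refine ⟨μ, hμ, (posSemidef_sProcedureMatrix_iff hW hB hμ).2 fun e => ?_⟩
    simpa [sub_eq_add_neg] using hL e

end SProcedure

theorem worst_case_eh_iff_LMIs_general {N K : ℕ}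
    (hh : Fin K → (Fin N → ℂ))
    (B : Fin K → Matrix (Fin N) (Fin N) ℂ) (hB : ∀ j, (B j).PosSemidef)
    (W : Fin K → Matrix (Fin N) (Fin N) ℂ) (hW : ∀ j, (W j).PosSemidef)
    (ζ ρ η σ2 : ℝ)
    (hη : 0 < η) (hσ2 : 0 < σ2) :
    (∀ e : Fin K → (Fin N → ℂ), (∀ j, (star (e j) ⬝ᵥ (B j) *ᵥ (e j)).re ≤ 1) →
        ζ * (1 - ρ) *
            ((∑ j, (star (hh j + e j) ⬝ᵥ (W j) *ᵥ (hh j + e j)).re) + σ2) ≥ η) ↔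
      (∃ μ t : Fin K → ℝ, (∀ j, 0 ≤ μ j ∧ 0 ≤ t j) ∧
        (!![ζ * (1 - ρ), Real.sqrt η; Real.sqrt η, (∑ j, t j) + σ2] :
          Matrix (Fin 2) (Fin 2) ℝ).PosSemidef ∧
        (∀ j, (Matrix.fromBlocks (W j + (μ j : ℂ) • B j)
            (Matrix.of fun k (_ : Unit) => ((W j) *ᵥ (hh j)) k)
            (Matrix.of fun (_ : Unit) k => (star (hh j) ᵥ* (W j)) k)
            (Matrix.of fun (_ : Unit) (_ : Unit) =>
              star (hh j) ⬝ᵥ (W j) *ᵥ (hh j) - (t j : ℂ) - (μ j : ℂ))).PosSemidef)) := by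
  set a := ζ * (1 - ρ)
  set f : Fin K → (Fin N → ℂ) → ℝ := fun j e => (star (hh j + e) ⬝ᵥ W j *ᵥ (hh j + e)).re
  set S : Fin K → Set (Fin N → ℂ) := fun j => {e | (star e ⬝ᵥ B j *ᵥ e).re ≤ 1}
  have hf : ∀ j e, 0 ≤ f j e := fun j e =>
    (Complex.nonneg_iff.1 ((hW j).dotProduct_mulVec_nonneg _)).1
  simp only [posSemidef_fin_two_iff, Real.sq_sqrt hη.le, ge_iff_le]
  constructor
  · intro hwc
    have ha : 0 < a := pos_of_mul_pos_left (hη.trans_le (hwc 0 fun j => by simp))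
      (add_nonneg (Finset.sum_nonneg fun j _ => hf j 0) hσ2.le)
    set t : Fin K → ℝ := fun j => sInf (f j '' S j)
    have ht0 : ∀ j, 0 ≤ t j := fun j => Real.sInf_nonneg (by rintro _ ⟨e, -, rfl⟩; exact hf j e)
    have ht : ∀ j e, e ∈ S j → t j ≤ f j e := fun j e he =>
      csInf_le ⟨0, by rintro _ ⟨e, -, rfl⟩; exact hf j e⟩ ⟨e, he, rfl⟩
    have hsum : η / a - σ2 ≤ ∑ j, t j :=
      le_sum_csInf_image_of_forall_le (fun j => ⟨0, by simp [S]⟩) fun e he => by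
        rw [sub_le_iff_le_add, div_le_iff₀' ha]
        exact hwc e he
    rw [sub_le_iff_le_add, div_le_iff₀' ha] at hsum
    choose μ hμ hLMI using fun j =>
      (exists_posSemidef_sProcedureMatrix_iff (hW j) (hB j)).2 (ht j)
    exact ⟨μ, t, fun j => ⟨hμ j, ht0 j⟩,
      ⟨ha.le, add_nonneg (Finset.sum_nonneg fun j _ => ht0 j) hσ2.le, hsum⟩, hLMI⟩
  · rintro ⟨μ, t, hμt, ⟨ha, -, hη'⟩, hLMI⟩ e he
    have ht : ∀ j, t j ≤ f j (e j) := fun j =>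
      (exists_posSemidef_sProcedureMatrix_iff (hW j) (hB j)).1 ⟨μ j, (hμt j).1, hLMI j⟩ _ (he j)
    calc η ≤ a * (∑ j, t j + σ2) := hη'
      _ ≤ a * (∑ j, f j (e j) + σ2) := by gcongr with j; exact ht j

/-- Full LMI reformulation of the worst-case energy-harvesting constraint of one
receiver in the robust beamforming and power-splitting design problem. -/
theorem worst_case_eh_iff_LMIs {N K : ℕ} (i : Fin K)
    (hh : Fin K → (Fin N → ℂ))
    (B : Fin K → Matrix (Fin N) (Fin N) ℂ) (hB : ∀ j, (B j).PosSemidef)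
    (W : Fin K → Matrix (Fin N) (Fin N) ℂ) (hW : ∀ j, (W j).PosSemidef)
    (ζ ρ η σ2 : ℝ) (hζ0 : 0 < ζ) (hζ1 : ζ ≤ 1) (hρ0 : 0 ≤ ρ) (hρ1 : ρ ≤ 1)
    (hη : 0 < η) (hσ2 : 0 < σ2) :
    (∀ e : Fin K → (Fin N → ℂ), (∀ j, (star (e j) ⬝ᵥ (B j) *ᵥ (e j)).re ≤ 1) →
        ζ * (1 - ρ) *
            ((∑ j, (star (hh j + e j) ⬝ᵥ (W j) *ᵥ (hh j + e j)).re) + σ2) ≥ η) ↔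
      (∃ μ t : Fin K → ℝ, (∀ j, 0 ≤ μ j ∧ 0 ≤ t j) ∧
        (!![ζ * (1 - ρ), Real.sqrt η; Real.sqrt η, (∑ j, t j) + σ2] :
          Matrix (Fin 2) (Fin 2) ℝ).PosSemidef ∧
        (∀ j, (Matrix.fromBlocks (W j + (μ j : ℂ) • B j)
            (Matrix.of fun k (_ : Unit) => ((W j) *ᵥ (hh j)) k)
            (Matrix.of fun (_ : Unit) k => (star (hh j) ᵥ* (W j)) k)
            (Matrix.of fun (_ : Unit) (_ : Unit) =>
              star (hh j) ⬝ᵥ (W j) *ᵥ (hh j) - (t j : ℂ) - (μ j : ℂ))).PosSemidef)) :=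
  worst_case_eh_iff_LMIs_general hh B hB W hW ζ ρ η σ2 hη hσ2
end
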